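/- arXiv:2004.03778 — 4 statements merged into one kernel-verified Lean document; each statement's English description precedes it below -/
import Mathlib

section
/- Let n ≥ 2 and for σ = (σ₁,…,σₙ) ∈ ℂⁿ let Q_σ(t) = tⁿ + Σ_{j=1}^{n}(−1)^j σ_j t^{n−j}. Then there exists a nonzero polynomial P in n variables over ℂ such that for every σ ∈ ℂⁿ, if there exist t₁ ≠ t₂ in ℂ with Q_σ′(t₁) = Q_σ′(t₂) = 0 and Q_σ(t₁) = Q_σ(t₂), then P(σ₁,…,σₙ) = 0. (That is, the semi-local bifurcation set B_G = {σ ∈ ℂⁿ : Q_σ has two distinct critical points with equal critical values} is contained in a proper algebraic subset of ℂⁿ.) -/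
/-!
Write `n = m + 1`. Over `ℂ`, `Q_σ' = n ∏ᵢ (t - rᵢ)` where `r₁, …, r_m` are the critical points,
and comparing coefficients (Vieta) gives `e_{k+1}(r) = (m - k)/(m + 1) · σ_{k+1}` for `k < m`.

Fix an antiderivative `A(t)` of `∏ᵢ (t - xᵢ)` over `ℂ[x₁, …, x_m]`. Then `Q_σ - n · A(r)` has
zero derivative, so `Q_σ(rᵢ) - Q_σ(rⱼ) = n · (A(xᵢ) - A(xⱼ))(r)`. Since `A` is unique up to an
additive constant, which cancels in these differences, `F = ∏_{i ≠ j} (A(xᵢ) - A(xⱼ))` is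
symmetric, hence a polynomial in `e₁, …, e_m`, hence a polynomial `P` in `σ` with
`P(σ) = F(r)`. It vanishes on `B_G`, and `P ≠ 0` because for `Q = tⁿ - n t` the critical
points are the distinct `m`-th roots of unity `ζ`, with pairwise distinct critical values `-m ζ`.
-/

/-- The general monic polynomial `Q_σ(t) = t^n + Σ_{j=1}^{n} (−1)^j σ_j t^{n−j}`,
with `σ j` (for `j : Fin n`) playing the role of `σ_{j+1}`. -/
noncomputable def genMonic (n : ℕ) (σ : Fin n → ℂ) : Polynomial ℂ :=
  Polynomial.X ^ n +
    ∑ j : Fin n, Polynomial.C ((-1) ^ ((j : ℕ) + 1) * σ j) * Polynomial.X ^ (n - ((j : ℕ) + 1))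

open Polynomial

theorem exists_map_univ_eq_of_card_eq {α : Type*} {m : ℕ} (s : Multiset α)
    (h : Multiset.card s = m) : ∃ r : Fin m → α, Finset.univ.val.map r = s := by
  subst h
  refine ⟨fun i => s.toList.get (Fin.cast (Multiset.length_toList s).symm i), ?_⟩
  rw [Fin.univ_val_map, ← List.ofFn_congr (Multiset.length_toList s) _, List.ofFn_get,
    Multiset.coe_toList]

namespace Polynomial

theorem exists_derivative_eq {R : Type*} [CommRing R] [Algebra ℚ R] (q : R[X]) :
    ∃ p : R[X], derivative p = q := by
  induction q using Polynomial.induction_on' with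
  | add q₁ q₂ h₁ h₂ =>
    obtain ⟨p₁, rfl⟩ := h₁
    obtain ⟨p₂, rfl⟩ := h₂
    exact ⟨p₁ + p₂, derivative_add⟩
  | monomial k a =>
    refine ⟨monomial (k + 1) (((k + 1 : ℕ) : ℚ)⁻¹ • a), ?_⟩
    rw [derivative_monomial, Nat.add_sub_cancel, mul_comm, ← nsmul_eq_mul,
      ← Nat.cast_smul_eq_nsmul ℚ, smul_smul, mul_inv_cancel₀ (by positivity), one_smul]

theorem eval_sub_eval_eq_of_derivative_eq {R : Type*} [CommRing R] [IsAddTorsionFree R]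
    {p q : R[X]} (h : derivative p = derivative q) (a b : R) :
    p.eval a - p.eval b = q.eval a - q.eval b := by
  have hc := eq_C_of_derivative_eq_zero (p := p - q) (by rw [derivative_sub, h, sub_self])
  have := congrArg (fun f => f.eval a - f.eval b) hc
  simp only [eval_sub, eval_C] at this
  linear_combination this

theorem exists_eq_C_leadingCoeff_mul_prod {K : Type*} [Field K] [IsAlgClosed K]
    {m : ℕ} {p : K[X]} (h : p.natDegree = m) :
    ∃ r : Fin m → K, p = C p.leadingCoeff * ∏ i, (X - C (r i)) := by
  have hcard := splits_iff_card_roots.mp (IsAlgClosed.splits p)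
  obtain ⟨r, hr⟩ := exists_map_univ_eq_of_card_eq p.roots (hcard.trans h)
  refine ⟨r, ?_⟩
  conv_lhs => rw [← C_leadingCoeff_mul_prod_multiset_X_sub_C hcard, ← hr, Multiset.map_map]
  rfl

end Polynomial

section CriticalValues

variable (K : Type*) [Field K] [CharZero K] (m : ℕ)

noncomputable def antiderivProdXSubX : (MvPolynomial (Fin m) K)[X] :=
  (exists_derivative_eq (∏ i, (X - C (MvPolynomial.X i)))).choose

theorem derivative_antiderivProdXSubX :
    derivative (antiderivProdXSubX K m) = ∏ i, (X - C (MvPolynomial.X i)) :=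
  (exists_derivative_eq _).choose_spec

noncomputable def critValueDiscr : MvPolynomial (Fin m) K :=
  ∏ ij ∈ Finset.univ.offDiag, ((antiderivProdXSubX K m).eval (MvPolynomial.X ij.1) -
    (antiderivProdXSubX K m).eval (MvPolynomial.X ij.2))

variable {K m}

theorem rename_eval_antiderivProdXSubX_sub (π : Equiv.Perm (Fin m)) (i j : Fin m) :
    MvPolynomial.rename π ((antiderivProdXSubX K m).eval (MvPolynomial.X i) -
      (antiderivProdXSubX K m).eval (MvPolynomial.X j)) =
    (antiderivProdXSubX K m).eval (MvPolynomial.X (π i)) -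
      (antiderivProdXSubX K m).eval (MvPolynomial.X (π j)) := by
  have h : derivative ((antiderivProdXSubX K m).map (MvPolynomial.rename π).toRingHom) =
      derivative (antiderivProdXSubX K m) := by
    rw [derivative_map, derivative_antiderivProdXSubX, Polynomial.map_prod]
    simp only [Polynomial.map_sub, map_X, map_C, AlgHom.toRingHom_eq_coe, RingHom.coe_coe,
      MvPolynomial.rename_X]
    exact Equiv.prod_comp π fun i => X - C (MvPolynomial.X i)
  rw [map_sub, ← eval_sub_eval_eq_of_derivative_eq h, ← MvPolynomial.rename_X π i,
    ← MvPolynomial.rename_X π j]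
  exact (congrArg₂ _ (eval_map_apply _ _) (eval_map_apply _ _)).symm

theorem critValueDiscr_isSymmetric : (critValueDiscr K m).IsSymmetric := by
  intro π
  rw [critValueDiscr, map_prod]
  simp only [rename_eval_antiderivProdXSubX_sub]
  exact Finset.prod_equiv (π.prodCongr π) (by simp) (fun _ _ => rfl)

theorem eval_sub_eval_eq_mul_aeval {p : K[X]} {c : K} {r : Fin m → K}
    (hp : derivative p = C c * ∏ i, (X - C (r i))) (i j : Fin m) :
    p.eval (r i) - p.eval (r j) = c * MvPolynomial.aeval r
      ((antiderivProdXSubX K m).eval (MvPolynomial.X i) -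
        (antiderivProdXSubX K m).eval (MvPolynomial.X j)) := by
  have h : derivative p =
      derivative (C c * (antiderivProdXSubX K m).map (MvPolynomial.aeval r).toRingHom) := by
    rw [hp, derivative_C_mul, derivative_map, derivative_antiderivProdXSubX, Polynomial.map_prod]
    simp
  rw [eval_sub_eval_eq_of_derivative_eq h, eval_mul, eval_mul, eval_C, eval_C, ← mul_sub, map_sub,
    ← MvPolynomial.aeval_X (R := K) r i, ← MvPolynomial.aeval_X (R := K) r j]
  exact congrArg _ (congrArg₂ _ (eval_map_apply _ _) (eval_map_apply _ _))

theorem aeval_critValueDiscr_eq_zero {p : K[X]} {c : K} {r : Fin m → K} (hc : c ≠ 0)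
    (hp : derivative p = C c * ∏ i, (X - C (r i))) {t₁ t₂ : K} (hne : t₁ ≠ t₂)
    (h₁ : (derivative p).eval t₁ = 0) (h₂ : (derivative p).eval t₂ = 0)
    (heq : p.eval t₁ = p.eval t₂) : MvPolynomial.aeval r (critValueDiscr K m) = 0 := by
  have hroot (t : K) (ht : (derivative p).eval t = 0) : ∃ i, r i = t := by
    rw [hp, eval_mul, eval_C, eval_prod, mul_eq_zero, Finset.prod_eq_zero_iff] at ht
    obtain ⟨i, -, hi⟩ := ht.resolve_left hc
    rw [eval_sub, eval_X, eval_C, sub_eq_zero] at hi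
    exact ⟨i, hi.symm⟩
  obtain ⟨i, rfl⟩ := hroot t₁ h₁
  obtain ⟨j, rfl⟩ := hroot t₂ h₂
  have hij : (i, j) ∈ Finset.univ.offDiag := by
    simpa using fun h : i = j => hne (congrArg r h)
  rw [critValueDiscr, map_prod]
  refine Finset.prod_eq_zero hij ?_
  have h := eval_sub_eval_eq_mul_aeval hp i j
  rw [heq, sub_self, eq_comm, mul_eq_zero] at h
  exact h.resolve_left hc

theorem aeval_critValueDiscr_ne_zero {p : K[X]} {c : K} {r : Fin m → K}
    (hp : derivative p = C c * ∏ i, (X - C (r i)))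
    (hinj : Function.Injective fun i => p.eval (r i)) :
    MvPolynomial.aeval r (critValueDiscr K m) ≠ 0 := by
  rw [critValueDiscr, map_prod, Finset.prod_ne_zero_iff]
  rintro ⟨i, j⟩ hij hzero
  have h := eval_sub_eval_eq_mul_aeval hp i j
  rw [hzero, mul_zero, sub_eq_zero] at h
  exact (Finset.mem_offDiag.mp hij).2.2 (hinj h)

theorem injective_eval_X_pow_sub_of_derivative_eq (hm : m ≠ 0) {r : Fin m → K}
    (hr : derivative (X ^ (m + 1) - C ((m + 1 : ℕ) : K) * X) =
      C ((m + 1 : ℕ) : K) * ∏ i, (X - C (r i))) :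
    Function.Injective fun i => (X ^ (m + 1) - C ((m + 1 : ℕ) : K) * X).eval (r i) := by
  have hprod : ∏ i, (X - C (r i)) = X ^ m - C 1 := by
    refine mul_left_cancel₀ (C_ne_zero.mpr (Nat.cast_ne_zero.mpr m.succ_ne_zero)) ?_
    rw [← hr, derivative_sub, derivative_X_pow, derivative_C_mul_X]
    simp only [map_one]
    push_cast
    ring
  have hr_inj : Function.Injective r := separable_prod_X_sub_C_iff.mp
    (hprod ▸ separable_X_pow_sub_C 1 (Nat.cast_ne_zero.mpr hm) one_ne_zero)
  have hpow (i : Fin m) : r i ^ m = 1 := by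
    have h := congrArg (eval (r i)) hprod
    rw [eval_prod, Finset.prod_eq_zero (Finset.mem_univ i) (by simp), eval_sub, eval_pow, eval_X,
      eval_C] at h
    exact sub_eq_zero.mp h.symm
  intro i j hij
  simp only [eval_sub, eval_pow, eval_X, eval_mul, eval_C, pow_succ, hpow, one_mul] at hij
  refine hr_inj (sub_eq_zero.mp ((mul_eq_zero.mp ?_).resolve_left (Nat.cast_ne_zero.mpr hm)))
  push_cast at hij
  linear_combination -hij

end CriticalValues

section GenMonic

variable {n : ℕ} (σ : Fin n → ℂ)

theorem degree_genMonic_sub_X_pow_lt :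
    (genMonic n σ - X ^ n).degree < (n : WithBot ℕ) := by
  rw [genMonic, add_sub_cancel_left]
  refine (degree_sum_le _ _).trans_lt ((Finset.sup_lt_iff (WithBot.bot_lt_coe n)).mpr ?_)
  intro j _
  exact (degree_C_mul_X_pow_le _ _).trans_lt (Nat.cast_lt.mpr (by omega))

theorem monic_genMonic : (genMonic n σ).Monic := by
  simpa using monic_X_pow_add (degree_genMonic_sub_X_pow_lt σ)

theorem natDegree_genMonic : (genMonic n σ).natDegree = n := by
  rw [← sub_add_cancel (genMonic n σ) (X ^ n), add_comm,
    natDegree_add_eq_left_of_degree_lt (by simpa using degree_genMonic_sub_X_pow_lt σ),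
    natDegree_X_pow]

theorem coeff_genMonic (k : Fin n) :
    (genMonic n σ).coeff (n - (k + 1)) = (-1) ^ ((k : ℕ) + 1) * σ k := by
  rw [genMonic, coeff_add, coeff_X_pow, if_neg (by omega), zero_add, finsetSum_coeff,
    Finset.sum_eq_single k]
  · rw [coeff_C_mul_X_pow, if_pos rfl]
  · intro j _ hjk
    rw [coeff_C_mul_X_pow, if_neg (fun h => hjk (Fin.ext (by omega)))]
  · exact fun h => absurd (Finset.mem_univ k) h

end GenMonic

theorem exists_derivative_genMonic_eq_prod (m : ℕ) (σ : Fin (m + 1) → ℂ) :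
    ∃ r : Fin m → ℂ, derivative (genMonic (m + 1) σ) =
      C ((m + 1 : ℕ) : ℂ) * ∏ i, (X - C (r i)) := by
  obtain ⟨r, hr⟩ := exists_eq_C_leadingCoeff_mul_prod
    (by rw [natDegree_derivative, natDegree_genMonic, Nat.add_sub_cancel] :
      (derivative (genMonic (m + 1) σ)).natDegree = m)
  rw [leadingCoeff_derivative, (monic_genMonic σ).leadingCoeff, one_mul, natDegree_genMonic] at hr
  exact ⟨r, hr⟩

theorem aeval_esymm_of_derivative_genMonic_eq {m : ℕ} {σ : Fin (m + 1) → ℂ} {r : Fin m → ℂ}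
    (hr : derivative (genMonic (m + 1) σ) = C ((m + 1 : ℕ) : ℂ) * ∏ i, (X - C (r i)))
    (k : Fin m) :
    MvPolynomial.aeval r (MvPolynomial.esymm (Fin m) ℂ (k + 1)) =
      ((m : ℂ) - k) / (m + 1) * σ k.castSucc := by
  have h := congrArg (coeff · (m - (k + 1))) hr
  have hk : m - (k + 1) + 1 = (m + 1) - (k.castSucc + 1) := by rw [Fin.val_castSucc]; omega
  have hcard : Multiset.card (Finset.univ.val.map r) = m := by simp
  have hprod : ∏ i, (X - C (r i)) = ((Finset.univ.val.map r).map fun t => X - C t).prod := by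
    rw [Multiset.map_map]; rfl
  simp only [coeff_derivative, coeff_C_mul, hk, coeff_genMonic] at h
  rw [hprod, Multiset.prod_X_sub_C_coeff _ (by omega), hcard, Nat.sub_sub_self (by omega),
    ← MvPolynomial.aeval_esymm_eq_multiset_esymm (Fin m) ℂ] at h
  have hcast : ((m - (k + 1) : ℕ) : ℂ) + 1 = m - k := by
    rw [Nat.cast_sub (by omega)]; push_cast; ring
  have hsign : ((-1 : ℂ) ^ ((k : ℕ) + 1)) ^ 2 = 1 := by
    rw [← pow_mul, mul_comm, pow_mul, neg_one_sq, one_pow]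
  rw [Fin.val_castSucc, hcast] at h
  push_cast at h
  rw [div_mul_eq_mul_div, eq_div_iff (Nat.cast_add_one_ne_zero m)]
  set e := MvPolynomial.aeval r (MvPolynomial.esymm (Fin m) ℂ (k + 1))
  linear_combination (-(-1) ^ ((k : ℕ) + 1)) * h + ((m - k) * σ k.castSucc - e * (m + 1)) * hsign

theorem exists_genMonic_eq_X_pow_sub {m : ℕ} (hm : m ≠ 0) :
    ∃ σ : Fin (m + 1) → ℂ, genMonic (m + 1) σ = X ^ (m + 1) - C ((m + 1 : ℕ) : ℂ) * X := by
  let j : Fin (m + 1) := ⟨m - 1, by omega⟩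
  refine ⟨Pi.single j (-(-1) ^ m * ((m + 1 : ℕ) : ℂ)), ?_⟩
  rw [genMonic, Fintype.sum_eq_single j]
  · have hj : (j : ℕ) + 1 = m := by simp only [j]; omega
    have hsign : ((-1 : ℂ) ^ m) ^ 2 = 1 := by
      rw [← pow_mul, mul_comm, pow_mul, neg_one_sq, one_pow]
    rw [Pi.single_eq_same, hj, Nat.add_sub_cancel_left, pow_one, sub_eq_add_neg, ← neg_mul,
      ← C_neg]
    congr 3
    linear_combination (-((m + 1 : ℕ) : ℂ)) * hsign
  · intro i hij
    rw [Pi.single_eq_of_ne hij, mul_zero, C_0, zero_mul]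

theorem exists_eval_eq_aeval_critValueDiscr (m : ℕ) :
    ∃ P : MvPolynomial (Fin (m + 1)) ℂ, ∀ (σ : Fin (m + 1) → ℂ) (r : Fin m → ℂ),
      derivative (genMonic (m + 1) σ) = C ((m + 1 : ℕ) : ℂ) * ∏ i, (X - C (r i)) →
      MvPolynomial.eval σ P = MvPolynomial.aeval r (critValueDiscr ℂ m) := by
  obtain ⟨G, hG⟩ := MvPolynomial.esymmAlgHom_fin_surjective ℂ le_rfl
    ⟨critValueDiscr ℂ m, critValueDiscr_isSymmetric⟩
  replace hG : MvPolynomial.aeval (fun k : Fin m => MvPolynomial.esymm (Fin m) ℂ (k + 1)) G =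
      critValueDiscr ℂ m := by
    rw [← MvPolynomial.esymmAlgHom_apply, hG]
  refine ⟨MvPolynomial.aeval (fun k : Fin m =>
    MvPolynomial.C (((m : ℂ) - k) / (m + 1)) * MvPolynomial.X k.castSucc) G, fun σ r hr => ?_⟩
  rw [← hG, ← MvPolynomial.aeval_eq_eval, MvPolynomial.comp_aeval_apply,
    MvPolynomial.comp_aeval_apply]
  congr 2 with k
  rw [aeval_esymm_of_derivative_genMonic_eq hr, map_mul, MvPolynomial.aeval_C,
    MvPolynomial.aeval_X]
  rfl

/-- The semi-local bifurcation set
`B_G = {σ : Q_σ has two distinct critical points with equal critical values}`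
is contained in a proper algebraic subset of `ℂⁿ`. -/
theorem stmt_5 (n : ℕ) (hn : 2 ≤ n) :
    ∃ P : MvPolynomial (Fin n) ℂ, P ≠ 0 ∧
      ∀ σ : Fin n → ℂ,
        (∃ t₁ t₂ : ℂ, t₁ ≠ t₂ ∧
          (Polynomial.derivative (genMonic n σ)).eval t₁ = 0 ∧
          (Polynomial.derivative (genMonic n σ)).eval t₂ = 0 ∧
          (genMonic n σ).eval t₁ = (genMonic n σ).eval t₂) →
        MvPolynomial.eval σ P = 0 := by
  obtain ⟨m, rfl⟩ : ∃ m, n = m + 1 := ⟨n - 1, by omega⟩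
  obtain ⟨P, hP⟩ := exists_eval_eq_aeval_critValueDiscr m
  refine ⟨P, fun hP0 => ?_, ?_⟩
  · obtain ⟨σ, hσ⟩ := exists_genMonic_eq_X_pow_sub (m := m) (by omega)
    obtain ⟨r, hr⟩ := exists_derivative_genMonic_eq_prod m σ
    have hzero := hP σ r hr
    rw [hP0, map_zero] at hzero
    rw [hσ] at hr
    exact aeval_critValueDiscr_ne_zero hr
      (injective_eval_X_pow_sub_of_derivative_eq (by omega) hr) hzero.symm
  · rintro σ ⟨t₁, t₂, hne, h₁, h₂, heq⟩
    obtain ⟨r, hr⟩ := exists_derivative_genMonic_eq_prod m σ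
    rw [hP σ r hr]
    exact aeval_critValueDiscr_eq_zero (Nat.cast_ne_zero.mpr m.succ_ne_zero) hr hne h₁ h₂ heq
end

section
/- Let n ≥ 2 and let λ, λ′ : Fin n → ℂ each be injective with λ₁+⋯+λₙ = 0 = λ′₁+⋯+λ′ₙ and λ₁⋯λₙ = 1 = λ′₁⋯λ′ₙ. Let κ = (κ₁,…,κ_{n−1}) and κ′ = (κ′₁,…,κ′_{n−1}) (with multiplicity) be determined by Q_λ′(t) = n∏_{j=1}^{n−1}(t−κ_j) and Q_{λ′}′(t) = n∏_{j=1}^{n−1}(t−κ′_j), where Q_λ(t) = ∏_{j=1}^{n}(t−λ_j). Then there exists ω ∈ ℂ with ωⁿ = 1 such that the multiset {κ′₁,…,κ′_{n−1}} equals {ωκ₁,…,ωκ_{n−1}} if and only if there exists ω′ ∈ ℂ with ω′ⁿ = 1 such that the multiset {λ′₁,…,λ′ₙ} equals {ω′λ₁,…,ω′λₙ}. (This shows the critical-point map Ξ : λ ↦ κ induces a bijection M⁰_{[n],1} ≅ W₀^{n−2}/ℤₙ.) -/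
open Polynomial

private lemma ms_of_prod_eq {s t : Multiset ℂ}
    (h : (s.map fun a => X - C a).prod = (t.map fun a => X - C a).prod) : s = t := by
  have := congrArg Polynomial.roots h
  rwa [roots_multiset_prod_X_sub_C, roots_multiset_prod_X_sub_C] at this

private lemma prod_fin {m : ℕ} (f : Fin m → ℂ) :
    (∏ j, (X - C (f j))) = ((Finset.univ.val.map f).map fun a => X - C a).prod := by
  rw [Multiset.map_map]; rfl

private lemma scale_prod {m : ℕ} {ω : ℂ} (hω : ω ≠ 0) (a : Fin m → ℂ) :
    (∏ j, (X - C (a j))).comp (C ω⁻¹ * X) = C (ω⁻¹ ^ m) * ∏ j, (X - C (ω * a j)) := by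
  rw [Polynomial.prod_comp]
  have : ∀ j : Fin m, (X - C (a j)).comp (C ω⁻¹ * X) = C ω⁻¹ * (X - C (ω * a j)) := by
    intro j
    rw [sub_comp, X_comp, C_comp, mul_sub, ← C_mul, inv_mul_cancel_left₀ hω]
  simp_rw [this]
  rw [Finset.prod_mul_distrib, Finset.prod_const, ← C_pow, Finset.card_univ, Fintype.card_fin]

private lemma scale_prod' {m : ℕ} {ω : ℂ} (hω : ω ≠ 0) (a : Fin m → ℂ) :
    (∏ j, (X - C (ω * a j))) = C (ω ^ m) * (∏ j, (X - C (a j))).comp (C ω⁻¹ * X) := by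
  rw [scale_prod hω a, ← mul_assoc, ← C_mul, ← mul_pow, mul_inv_cancel₀ hω, one_pow, map_one,
    one_mul]

private lemma deriv_scaled {n : ℕ} (hn : 1 ≤ n) {ω : ℂ} (hω : ω ^ n = 1)
    (l : Fin n → ℂ) (κ : Fin (n - 1) → ℂ)
    (hκ : derivative (∏ j, (X - C (l j))) = C (n : ℂ) * ∏ j, (X - C (κ j))) :
    derivative (∏ j, (X - C (ω * l j))) = C (n : ℂ) * ∏ j, (X - C (ω * κ j)) := by
  have hω0 : ω ≠ 0 := fun h => by simp [h, zero_pow (by omega : n ≠ 0)] at hω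
  rw [scale_prod' hω0 l, derivative_C_mul, derivative_comp, hκ, mul_comp, C_comp,
    scale_prod hω0 κ]
  have hd : derivative (C ω⁻¹ * X) = C ω⁻¹ := by
    rw [derivative_C_mul, derivative_X, mul_one]
  rw [hd]
  simp only [← mul_assoc, ← C_mul]
  have h2 : ω⁻¹ * ω⁻¹ ^ (n - 1) = 1 := by
    rw [← pow_succ', show n - 1 + 1 = n from by omega, inv_pow, hω, inv_one]
  have h1 : ω ^ n * ω⁻¹ * (n : ℂ) * ω⁻¹ ^ (n - 1) = (n : ℂ) := by
    calc ω ^ n * ω⁻¹ * (n : ℂ) * ω⁻¹ ^ (n - 1)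
        = ω ^ n * (ω⁻¹ * ω⁻¹ ^ (n - 1)) * (n : ℂ) := by ring
      _ = (n : ℂ) := by rw [h2, hω]; ring
  rw [h1]

private lemma prod_neg_fin {n : ℕ} (f : Fin n → ℂ) :
    ∏ x : Fin n, -f x = (-1) ^ n * ∏ x, f x := by
  rw [Finset.prod_congr rfl (fun x _ => (neg_one_mul (f x)).symm),
    Finset.prod_mul_distrib, Finset.prod_const, Finset.card_univ, Fintype.card_fin]

/-- For normalized injective tuples `λ, λ'` (zero sum, product one)
with critical-point tuples `κ, κ'` of `Q_λ, Q_{λ'}`, the multisets of critical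
points agree up to an `n`-th root of unity iff the multisets of roots agree up
to an `n`-th root of unity. -/
theorem stmt_8 (n : ℕ) (hn : 2 ≤ n) (l l' : Fin n → ℂ)
    (hl : Function.Injective l) (hl' : Function.Injective l')
    (hsum : ∑ i, l i = 0) (hsum' : ∑ i, l' i = 0)
    (hprod : ∏ i, l i = 1) (hprod' : ∏ i, l' i = 1)
    (κ κ' : Fin (n - 1) → ℂ)
    (hκ : Polynomial.derivative (∏ j : Fin n, (Polynomial.X - Polynomial.C (l j))) =
      Polynomial.C (n : ℂ) * ∏ j : Fin (n - 1), (Polynomial.X - Polynomial.C (κ j)))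
    (hκ' : Polynomial.derivative (∏ j : Fin n, (Polynomial.X - Polynomial.C (l' j))) =
      Polynomial.C (n : ℂ) * ∏ j : Fin (n - 1), (Polynomial.X - Polynomial.C (κ' j))) :
    (∃ ω : ℂ, ω ^ n = 1 ∧
        (Finset.univ.val.map κ' : Multiset ℂ) =
          (Finset.univ.val.map κ).map (fun z => ω * z)) ↔
    (∃ ω' : ℂ, ω' ^ n = 1 ∧
        (Finset.univ.val.map l' : Multiset ℂ) =
          (Finset.univ.val.map l).map (fun z => ω' * z)) := by
  have hn1 : 1 ≤ n := by omega
  constructor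
  · rintro ⟨ω, hωn, hms⟩
    refine ⟨ω, hωn, ?_⟩
    have hω0 : ω ≠ 0 := fun h => by
      simp [h, zero_pow (by omega : n ≠ 0)] at hωn
    have hκprod : (∏ j, (X - C (κ' j))) = ∏ j, (X - C (ω * κ j)) := by
      rw [prod_fin, prod_fin, hms]
      simp only [Multiset.map_map, Function.comp_def]
    have hR : derivative (∏ j, (X - C (ω * l j))) = C (n : ℂ) * ∏ j, (X - C (ω * κ j)) :=
      deriv_scaled hn1 hωn l κ hκ
    have hder : derivative ((∏ j, (X - C (l' j))) - ∏ j, (X - C (ω * l j))) = 0 := by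
      rw [derivative_sub, hκ', hR, hκprod, sub_self]
    have hC := eq_C_of_derivative_eq_zero hder
    have heval : Polynomial.eval 0 ((∏ j, (X - C (l' j))) - ∏ j, (X - C (ω * l j))) = 0 := by
      simp only [eval_sub, eval_prod, eval_X, eval_C, zero_sub]
      rw [prod_neg_fin, prod_neg_fin, hprod']
      have : ∏ x : Fin n, (ω * l x) = ω ^ n * ∏ x, l x := by
        rw [Finset.prod_mul_distrib, Finset.prod_const, Finset.card_univ, Fintype.card_fin]
      rw [this, hprod, hωn]
      ring
    have h0 : ((∏ j, (X - C (l' j))) - ∏ j, (X - C (ω * l j))).coeff 0 = 0 := by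
      rwa [← Polynomial.coeff_zero_eq_eval_zero] at heval
    rw [h0, map_zero] at hC
    have hQ : (∏ j, (X - C (l' j))) = ∏ j, (X - C (ω * l j)) := sub_eq_zero.mp hC
    have := ms_of_prod_eq (s := Finset.univ.val.map l')
      (t := Finset.univ.val.map fun j => ω * l j) (by rw [← prod_fin, ← prod_fin, hQ])
    rw [this]
    simp only [Multiset.map_map, Function.comp_def]
  · rintro ⟨ω, hωn, hms⟩
    refine ⟨ω, hωn, ?_⟩
    have hω0 : ω ≠ 0 := fun h => by
      simp [h, zero_pow (by omega : n ≠ 0)] at hωn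
    have hlprod : (∏ j, (X - C (l' j))) = ∏ j, (X - C (ω * l j)) := by
      rw [prod_fin, prod_fin, hms]
      simp only [Multiset.map_map, Function.comp_def]
    have hR : derivative (∏ j, (X - C (ω * l j))) = C (n : ℂ) * ∏ j, (X - C (ω * κ j)) :=
      deriv_scaled hn1 hωn l κ hκ
    have hkey : C (n : ℂ) * (∏ j, (X - C (κ' j))) = C (n : ℂ) * ∏ j, (X - C (ω * κ j)) := by
      rw [← hκ', hlprod, hR]
    have hn0 : (C (n : ℂ)) ≠ 0 := by
      simp only [ne_eq, Polynomial.C_eq_zero, Nat.cast_eq_zero]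
      omega
    have hκprod := mul_left_cancel₀ hn0 hkey
    have := ms_of_prod_eq (s := Finset.univ.val.map κ')
      (t := Finset.univ.val.map fun j => ω * κ j) (by rw [← prod_fin, ← prod_fin, hκprod])
    rw [this]
    simp only [Multiset.map_map, Function.comp_def]
end

section
/- Let a, ã ∈ ℂ and set Q(t) = t³ + a·t − 1 and Q̃(t) = t³ + ã·t − 1. If the multiset of critical values of Q̃ equals the multiset of critical values of Q, then ã³ = a³; equivalently, there exists ω ∈ ℂ with ω³ = 1 such that ã = ω·a, and the roots of Q̃ are obtained from the roots of Q by multiplication by a cube root of unity. (Hence for n = 3 there is exactly one analytic class of type II quasi-homogeneous functions with a given Henry–Parusiński invariant.) -/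
open Polynomial

lemma aux_crit (a κ₁ κ₂ : ℂ)
    (h : derivative ((X:ℂ[X])^3 + C a * X - C 1) = C 3 * (X - C κ₁) * (X - C κ₂)) :
    κ₂ = -κ₁ ∧ a = -3*κ₁^2 := by
  have hD : derivative ((X:ℂ[X])^3 + C a * X - C 1) = C 3 * X^2 + C a := by
    simp
    rw [← C_1, ← C_add]; norm_num
  rw [hD] at h
  have h1 := congrArg (Polynomial.eval κ₁) h
  have h2 := congrArg (Polynomial.eval κ₂) h
  have h0 := congrArg (Polynomial.eval 0) h
  simp at h1 h2 h0
  have hs : (κ₁ + κ₂)^2 = 0 := by linear_combination (h1 + h2 - 2*h0)/3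
  have hs' : κ₁ + κ₂ = 0 := pow_eq_zero_iff (n := 2) (by norm_num) |>.mp hs
  exact ⟨by linear_combination hs', by linear_combination h1⟩

lemma aux_roots (a b ω : ℂ) (hω : ω^3 = 1) (hb : b = ω * a) :
    ((X:ℂ[X])^3 + C b * X - C 1).roots
      = ((X:ℂ[X])^3 + C a * X - C 1).roots.map (fun z => ω⁻¹ * z) := by
  have hω0 : ω ≠ 0 := by
    intro h; rw [h] at hω; norm_num at hω
  set Q : ℂ[X] := X^3 + C a * X - C 1 with hQ
  have hmonic : Q.Monic := by
    rw [hQ]; monicity!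
  have hdeg : Q.natDegree = 3 := by
    rw [hQ]; compute_degree!
  have hsplit : Q.Splits := IsAlgClosed.splits Q
  have hcard : Q.roots.card = 3 := by
    rw [(splits_iff_card_roots).mp hsplit, hdeg]
  have hfact : Q = (Q.roots.map fun r => X - C r).prod :=
    (hsplit.eq_prod_roots_of_monic hmonic)
  have hcomp : (X:ℂ[X])^3 + C b * X - C 1 = Q.comp (C ω * X) := by
    rw [hQ]
    simp only [sub_comp, add_comp, mul_comp, pow_comp, X_comp, C_comp]
    rw [hb, C_mul, mul_pow, ← C_pow, hω, C_1]
    ring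
  have key : (X:ℂ[X])^3 + C b * X - C 1
      = ((Q.roots.map (fun z => ω⁻¹ * z)).map fun r => X - C r).prod := by
    rw [hcomp]
    conv_lhs => rw [hfact]
    rw [multiset_prod_comp]
    rw [Multiset.map_map, Multiset.map_map]
    have : ∀ r : ℂ, ((X:ℂ[X]) - C r).comp (C ω * X) = C ω * (X - C (ω⁻¹ * r)) := by
      intro r
      have hr : ω * (ω⁻¹ * r) = r := by field_simp
      simp only [sub_comp, X_comp, C_comp]
      rw [mul_sub, ← C_mul, hr]
    simp only [Function.comp, this]
    rw [Multiset.prod_map_mul]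
    have : (Q.roots.map fun _ => (C ω : ℂ[X])).prod = 1 := by
      rw [Multiset.map_const', Multiset.prod_replicate, hcard, ← C_pow, hω, C_1]
    rw [this, one_mul]
  rw [key, roots_multiset_prod_X_sub_C]

/-- If the cubics `Q(t) = t³ + a·t − 1` and `Qb(t) = t³ + b·t − 1`
have the same multiset of critical values, then `b³ = a³`; equivalently there
is a cube root of unity `ω` with `b = ω·a`, and the roots of `Qb` are obtained
from the roots of `Q` by multiplication by a cube root of unity. -/
theorem stmt_16 (a b : ℂ) (Q Qb : Polynomial ℂ)
    (hQ : Q = Polynomial.X ^ 3 + Polynomial.C a * Polynomial.X - Polynomial.C 1)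
    (hQb : Qb = Polynomial.X ^ 3 + Polynomial.C b * Polynomial.X - Polynomial.C 1)
    (κ₁ κ₂ μ₁ μ₂ : ℂ)
    (hκ : Polynomial.derivative Q =
      Polynomial.C 3 * (Polynomial.X - Polynomial.C κ₁) *
        (Polynomial.X - Polynomial.C κ₂))
    (hμ : Polynomial.derivative Qb =
      Polynomial.C 3 * (Polynomial.X - Polynomial.C μ₁) *
        (Polynomial.X - Polynomial.C μ₂))
    (hcv : ({Qb.eval μ₁, Qb.eval μ₂} : Multiset ℂ) =
      ({Q.eval κ₁, Q.eval κ₂} : Multiset ℂ)) :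
    b ^ 3 = a ^ 3 ∧
    ∃ ω : ℂ, ω ^ 3 = 1 ∧ b = ω * a ∧
      ∃ ω' : ℂ, ω' ^ 3 = 1 ∧ Qb.roots = Q.roots.map (fun z => ω' * z) := by
  subst hQ hQb
  obtain ⟨hk2, ha⟩ := aux_crit a κ₁ κ₂ hκ
  obtain ⟨hm2, hbb⟩ := aux_crit b μ₁ μ₂ hμ
  have hprod := congrArg Multiset.prod hcv
  simp only [Multiset.insert_eq_cons, Multiset.prod_cons, Multiset.prod_singleton, eval_sub,
    eval_add, eval_mul, eval_pow, eval_X, eval_C, eval_one] at hprod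
  subst hk2 hm2 ha hbb
  have hba : (-3*μ₁^2)^3 = (-3*κ₁^2)^3 := by linear_combination (27/4) * hprod
  refine ⟨hba, ?_⟩
  by_cases h0 : (-3*κ₁^2 : ℂ) = 0
  · have hb0 : (-3*μ₁^2 : ℂ) = 0 := by
      have : (-3*μ₁^2 : ℂ)^3 = 0 := by rw [hba, h0]; ring
      exact pow_eq_zero_iff (n := 3) (by norm_num) |>.mp this
    refine ⟨1, by norm_num, by rw [hb0, h0]; ring, 1, by norm_num, ?_⟩
    rw [hb0, h0]
    simp
  · set A := (-3*κ₁^2 : ℂ)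
    set B := (-3*μ₁^2 : ℂ)
    have hω : (B/A)^3 = 1 := by
      rw [div_pow, hba]
      exact div_self (pow_ne_zero 3 h0)
    have hBA : B = (B/A) * A := by field_simp
    exact ⟨B/A, hω, hBA, (B/A)⁻¹, by rw [inv_pow, hω, inv_one],
      aux_roots A B (B/A) hω hBA⟩
end

section
/- Define the monic cubics Q₁(t) = t³ − (11/3)t² + (8/3)t − 1, Q₂(t) = t³ − (2/3)t² − (5/3)t − 1, Q₃(t) = t³ + (13/3)t² + (40/9)t − 1 in ℂ[t]. Then: (i) each Q_i has the same multiset of critical values, namely {−7/3, −329/729} (the critical points being {2, 4/9}, {1, −5/9}, {−2/3, −20/9} respectively); and (ii) for all i ≠ j there is no ω ∈ ℂ with ω³ = 1 such that Q_i(t) = Q_j(ω·t) as polynomials. (Hence the corresponding quasi-homogeneous functions f^i(x,y) = y^{3p} − σ₁ y^{2p}x^{q} + σ₂ y^{p}x^{2q} − x^{3q} have the same Henry–Parusiński invariant but lie in three pairwise distinct analytic equivalence classes.) -/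
open Polynomial

lemma aux_comp_coeff_one (p : Polynomial ℂ) (ω : ℂ) :
    (p.comp (C ω * X)).coeff 1 = ω * p.coeff 1 := by
  induction p using Polynomial.induction_on' with
  | add p q hp hq => simp [add_comp, hp, hq, mul_add]
  | monomial n a =>
      rw [← C_mul_X_pow_eq_monomial]
      simp only [mul_comp, C_comp, pow_comp, X_comp, mul_pow, ← mul_assoc, ← C_pow, ← C_mul]
      simp only [coeff_C_mul, coeff_X_pow, coeff_C_mul_X_pow]
      rcases eq_or_ne n 1 with h | h
      · subst h; simp; ring
      · simp [Ne.symm h]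

/-- The three monic cubics
`Q₁ = t³ − (11/3)t² + (8/3)t − 1`, `Q₂ = t³ − (2/3)t² − (5/3)t − 1`,
`Q₃ = t³ + (13/3)t² + (40/9)t − 1` have the same multiset of critical values
`{−7/3, −329/729}` (with critical points `{2, 4/9}`, `{1, −5/9}`,
`{−2/3, −20/9}` respectively), yet no two of them are related by
`Qᵢ(t) = Qⱼ(ω·t)` for a cube root of unity `ω`. -/
theorem stmt_17 (Q₁ Q₂ Q₃ : Polynomial ℂ)
    (hQ₁ : Q₁ = X ^ 3 - C (11 / 3) * X ^ 2 + C (8 / 3) * X - C 1)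
    (hQ₂ : Q₂ = X ^ 3 - C (2 / 3) * X ^ 2 - C (5 / 3) * X - C 1)
    (hQ₃ : Q₃ = X ^ 3 + C (13 / 3) * X ^ 2 + C (40 / 9) * X - C 1) :
    (derivative Q₁ = C 3 * (X - C 2) * (X - C (4 / 9)) ∧
     derivative Q₂ = C 3 * (X - C 1) * (X - C (-5 / 9)) ∧
     derivative Q₃ = C 3 * (X - C (-2 / 3)) * (X - C (-20 / 9)) ∧
     ({Q₁.eval 2, Q₁.eval (4 / 9)} : Multiset ℂ) = {-7 / 3, -329 / 729} ∧
     ({Q₂.eval 1, Q₂.eval (-5 / 9)} : Multiset ℂ) = {-7 / 3, -329 / 729} ∧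
     ({Q₃.eval (-2 / 3), Q₃.eval (-20 / 9)} : Multiset ℂ) = {-7 / 3, -329 / 729}) ∧
    (∀ ω : ℂ, ω ^ 3 = 1 →
      Q₁ ≠ Q₂.comp (C ω * X) ∧ Q₁ ≠ Q₃.comp (C ω * X) ∧
      Q₂ ≠ Q₁.comp (C ω * X) ∧ Q₂ ≠ Q₃.comp (C ω * X) ∧
      Q₃ ≠ Q₁.comp (C ω * X) ∧ Q₃ ≠ Q₂.comp (C ω * X)) := by
  subst hQ₁ hQ₂ hQ₃
  have c1 : (X ^ 3 - C ((11:ℂ) / 3) * X ^ 2 + C (8 / 3) * X - C 1).coeff 1 = 8 / 3 := by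
    simp [coeff_X_pow, coeff_C, coeff_one]
  have c2 : (X ^ 3 - C ((2:ℂ) / 3) * X ^ 2 - C (5 / 3) * X - C 1).coeff 1 = -(5 / 3) := by
    simp [coeff_X_pow, coeff_C, coeff_one]
  have c3 : (X ^ 3 + C ((13:ℂ) / 3) * X ^ 2 + C (40 / 9) * X - C 1).coeff 1 = 40 / 9 := by
    simp [coeff_X_pow, coeff_C, coeff_one]
  constructor
  · refine ⟨?_, ?_, ?_, ?_, ?_, ?_⟩
    · apply Polynomial.funext; intro x; simp; ring
    · apply Polynomial.funext; intro x; simp; ring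
    · apply Polynomial.funext; intro x; simp; ring
    all_goals norm_num
  · intro ω hω
    refine ⟨?_, ?_, ?_, ?_, ?_, ?_⟩ <;> intro h <;>
      [(have h1 := congrArg (fun p => Polynomial.coeff p 1) h;
        simp only [aux_comp_coeff_one, c1, c2] at h1;
        have : ω = -(8/5) := by linear_combination ((3:ℂ)/5) * h1);
       (have h1 := congrArg (fun p => Polynomial.coeff p 1) h;
        simp only [aux_comp_coeff_one, c1, c3] at h1;
        have : ω = 3/5 := by linear_combination (-(9:ℂ)/40) * h1);
       (have h1 := congrArg (fun p => Polynomial.coeff p 1) h;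
        simp only [aux_comp_coeff_one, c2, c1] at h1;
        have : ω = -(5/8) := by linear_combination (-(3:ℂ)/8) * h1);
       (have h1 := congrArg (fun p => Polynomial.coeff p 1) h;
        simp only [aux_comp_coeff_one, c2, c3] at h1;
        have : ω = -(3/8) := by linear_combination (-(9:ℂ)/40) * h1);
       (have h1 := congrArg (fun p => Polynomial.coeff p 1) h;
        simp only [aux_comp_coeff_one, c3, c1] at h1;
        have : ω = 5/3 := by linear_combination (-(3:ℂ)/8) * h1);
       (have h1 := congrArg (fun p => Polynomial.coeff p 1) h;
        simp only [aux_comp_coeff_one, c3, c2] at h1;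
        have : ω = -(8/3) := by linear_combination ((3:ℂ)/5) * h1)] <;>
    · rw [this] at hω
      norm_num at hω
end
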